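/- arXiv:1811.05793 — 2 statements merged into one kernel-verified Lean document; each statement's English description precedes it below -/
import Mathlib

section
/- Let t be a positive integer and let U, V ⊆ G be finite sets with t ≤ |V| ≤ |U|. Then ∑_{x ∈ G} min(1_U*1_V(x), t) ≥ t·(|U| + |V| − t − α), where α := α(U, V). (The sum has finitely many nonzero terms, since 1_U*1_V(x) = 0 unless x ∈ U+V.) -/
/-!
Induction on `|V|` via the Dyson `e`-transform `(U', V') := (U ∪ (e + V), V ∩ (U - e))`. Together
with the residual pair `(U'', V'') := (U \ (e + V), V \ (U - e))` it splits the representation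
function pointwise, `1_U*1_V = 1_{U'}*1_{V'} + 1_{U''}*1_{V''}`, so truncations at levels `k` and
`l` of the two new pairs add up to at most the truncation of `1_U*1_V` at level `k + l`. If `m := |V'|` is at least
`t`, induct on `(U', V')` at level `t`; otherwise `(U', V')` contributes its full `m|U'|` and we
induct on the residual pair at level `t - m`. If no `e` gives `0 < |V'| < |V|`, then `U` is
invariant under translation by `V - V`, so `⟨V - b⟩` fits in a translate of `U`, whence
`α ≥ |V|` and the trivial bound `t|U|` suffices.
-/

open Pointwise

/-- `alphaFn U V` is the maximum of `|V'|` over all finite subsets `V' ⊆ G` such that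
`|V'| ≤ |V|` and the subgroup `⟨V'⟩` generated by `V'` is finite with
`|⟨V'⟩| ≤ |U| + |V| - |V'|`. -/
noncomputable def alphaFn {G : Type*} [AddCommGroup G] (U V : Finset G) : ℕ :=
  sSup {k : ℕ | ∃ V' : Finset G, V'.card = k ∧ V'.card ≤ V.card ∧
    0 < Nat.card (AddSubgroup.closure (V' : Set G)) ∧
    Nat.card (AddSubgroup.closure (V' : Set G)) + V'.card ≤ U.card + V.card}

section

open Finset AddAction

namespace Finset

section RepCount

variable {G : Type*} [DecidableEq G]

def repCount [Add G] (s t : Finset G) (x : G) : ℕ := #{p ∈ s ×ˢ t | p.1 + p.2 = x}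

def truncatedRepSum [Add G] (s t : Finset G) (k : ℕ) : ℕ := ∑ x ∈ s + t, min (repCount s t x) k

lemma repCount_le_card_right [Add G] [IsRightCancelAdd G] (s t : Finset G) (x : G) :
    repCount s t x ≤ #t :=
  card_le_card_of_injOn Prod.snd (fun p hp ↦ (mem_product.1 (mem_filter.1 hp).1).2)
    fun p hp q hq hpq ↦ by
      simp only [coe_filter, Set.mem_ofPred_eq] at hp hq
      exact Prod.ext (add_right_cancel (hpq ▸ hp.2.trans hq.2.symm)) hpq

lemma sum_repCount [Add G] (s t : Finset G) : ∑ x ∈ s + t, repCount s t x = #s * #t := by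
  rw [← card_product]
  exact (card_eq_sum_card_fiberwise fun p hp ↦
    add_mem_add (mem_product.1 hp).1 (mem_product.1 hp).2).symm

lemma truncatedRepSum_zero [Add G] (s t : Finset G) : truncatedRepSum s t 0 = 0 := by
  simp [truncatedRepSum]

lemma truncatedRepSum_of_card_le [Add G] [IsRightCancelAdd G] {s t : Finset G} {k : ℕ}
    (h : #t ≤ k) : truncatedRepSum s t k = #s * #t := by
  rw [← sum_repCount]
  exact sum_congr rfl fun x _ ↦ min_eq_left ((repCount_le_card_right s t x).trans h)

lemma mul_card_le_truncatedRepSum [Add G] [IsRightCancelAdd G] {s t : Finset G} {k : ℕ}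
    (h : k ≤ #t) : k * #s ≤ truncatedRepSum s t k := by
  obtain ht | ht := (#t).eq_zero_or_pos
  · simp [Nat.le_zero.1 (ht ▸ h)]
  refine le_of_mul_le_mul_left ?_ ht
  calc #t * (k * #s) = ∑ x ∈ s + t, k * repCount s t x := by
        rw [← mul_sum, sum_repCount]; ring
    _ ≤ ∑ x ∈ s + t, #t * min (repCount s t x) k := sum_le_sum fun x _ ↦ by
        rcases le_total (repCount s t x) k with hx | hx
        · rw [min_eq_left hx]
          exact Nat.mul_le_mul_right _ h
        · rw [min_eq_right hx, mul_comm #t]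
          exact Nat.mul_le_mul_left _ (repCount_le_card_right s t x)
    _ = #t * truncatedRepSum s t k := by rw [truncatedRepSum, mul_sum]

end RepCount

section Dyson

variable {G : Type*} [AddCommGroup G] [DecidableEq G]

lemma mem_vadd_finset_iff_sub_mem {e a : G} {s : Finset G} : a ∈ e +ᵥ s ↔ a - e ∈ s := by
  rw [← neg_neg e, mem_neg_vadd_finset_iff, vadd_eq_add, neg_neg, sub_eq_neg_add]

/-- The pairs summing to `x` that the Dyson transform does not keep are matched with the new ones
by the involution `(a, b) ↦ (b + e, a - e)`. -/
lemma repCount_eq_repCount_addDysonETransform_add (e : G) (s t : Finset G) (x : G) :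
    repCount s t x = repCount (addDysonETransform e (s, t)).1 (addDysonETransform e (s, t)).2 x
      + repCount (s \ (e +ᵥ t)) (t \ (-e +ᵥ s)) x := by
  simp only [repCount, addDysonETransform_fst, addDysonETransform_snd]
  rw [← card_union_of_disjoint]
  swap
  · simp only [disjoint_left, mem_filter, mem_product, mem_inter, mem_sdiff]
    grind
  refine card_bij' (fun p _ ↦ if p.2 + e ∈ s ∨ p.1 - e ∉ t then p else (p.2 + e, p.1 - e))
    (fun p _ ↦ if p.1 ∈ s then p else (p.2 + e, p.1 - e)) ?_ ?_ ?_ ?_ <;>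
  · simp only [mem_union, mem_filter, mem_product, mem_inter, mem_sdiff,
      mem_vadd_finset_iff_sub_mem, sub_neg_eq_add, Prod.ext_iff]
    intro p hp
    split_ifs <;> grind [sub_add_cancel, add_sub_cancel_right]

lemma card_sdiff_add_card_addDysonETransform_snd (e : G) (s t : Finset G) :
    #(s \ (e +ᵥ t)) + #(addDysonETransform e (s, t)).2 = #s := by
  rw [addDysonETransform_snd, ← card_vadd_finset e (t ∩ _), vadd_finset_inter, vadd_neg_vadd,
    inter_comm]
  exact card_sdiff_add_card_inter s _

lemma card_sdiff_neg_vadd_add_card_addDysonETransform_snd (e : G) (s t : Finset G) :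
    #(t \ (-e +ᵥ s)) + #(addDysonETransform e (s, t)).2 = #t :=
  card_sdiff_add_card_inter t _

lemma truncatedRepSum_addDysonETransform_add_le (e : G) (s t : Finset G) (k l : ℕ) :
    truncatedRepSum (addDysonETransform e (s, t)).1 (addDysonETransform e (s, t)).2 k
      + truncatedRepSum (s \ (e +ᵥ t)) (t \ (-e +ᵥ s)) l ≤ truncatedRepSum s t (k + l) := by
  unfold truncatedRepSum
  grw [sum_le_sum_of_subset (addDysonETransform.subset e (s, t)),
    sum_le_sum_of_subset (add_subset_add sdiff_subset sdiff_subset : _ ⊆ s + t),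
    ← sum_add_distrib]
  refine sum_le_sum fun x _ ↦ ?_
  rw [repCount_eq_repCount_addDysonETransform_add e s t x]
  exact le_min (add_le_add (min_le_left _ _) (min_le_left _ _))
    (add_le_add (min_le_right _ _) (min_le_right _ _))

end Dyson
end Finset

section Alpha

variable {G : Type*} [AddCommGroup G]

lemma le_alphaFn {U V V' : Finset G} (hV' : #V' ≤ #V) [Finite (AddSubgroup.closure (V' : Set G))]
    (h : Nat.card (AddSubgroup.closure (V' : Set G)) + #V' ≤ #U + #V) : #V' ≤ alphaFn U V :=
  le_csSup ⟨#V, fun _ ⟨_, hk, hle, _⟩ ↦ hk ▸ hle⟩ ⟨V', rfl, hV', Nat.card_pos, h⟩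

lemma alphaFn_mono {U₁ V₁ U₂ V₂ : Finset G} (hV : #V₁ ≤ #V₂) (hUV : #U₁ + #V₁ ≤ #U₂ + #V₂) :
    alphaFn U₁ V₁ ≤ alphaFn U₂ V₂ :=
  csSup_le' fun _ ⟨V', hk, hle, hpos, hcard⟩ ↦
    le_csSup ⟨#V₂, fun _ ⟨_, hk, hle, _⟩ ↦ hk ▸ hle⟩ ⟨V', hk, hle.trans hV, hpos, hcard.trans hUV⟩

variable [DecidableEq G]

lemma finite_stabilizer_finset {U : Finset G} (hU : U.Nonempty) : Finite (stabilizer G U) := by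
  simpa using (stabilizer_finite (coe_nonempty.2 hU) U.finite_toSet).to_subtype

lemma card_stabilizer_finset_le {U : Finset G} {a : G} (ha : a ∈ U) :
    Nat.card (stabilizer G U) ≤ #U := by
  rw [← SetLike.coe_sort_coe, Nat.card_coe_set_eq, ← Set.ncard_vadd_set a, ← Set.ncard_coe_finset]
  exact Set.ncard_le_ncard (by simpa using vadd_set_stabilizer_subset (s := (U : Set G)) ha)

lemma card_le_alphaFn_of_sub_mem_stabilizer {U V : Finset G} (hU : U.Nonempty) {b : G}
    (h : ∀ v ∈ V, v - b ∈ stabilizer G U) : #V ≤ alphaFn U V := by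
  obtain ⟨a, ha⟩ := hU
  have := finite_stabilizer_finset ⟨a, ha⟩
  have hcl : AddSubgroup.closure ((-b +ᵥ V : Finset G) : Set G) ≤ stabilizer G U := by
    rw [AddSubgroup.closure_le]
    intro x hx
    obtain ⟨v, hv, rfl⟩ := mem_vadd_finset.1 hx
    simpa [neg_add_eq_sub] using h v hv
  have := Finite.of_injective _ (AddSubgroup.inclusion_injective hcl)
  have := (AddSubgroup.card_le_of_le hcl).trans (card_stabilizer_finset_le ha)
  rw [← card_vadd_finset (-b) V]
  exact le_alphaFn (card_vadd_finset _ _).le (by rw [card_vadd_finset]; omega)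

end Alpha

variable {G : Type*} [AddCommGroup G] [DecidableEq G]

lemma exists_addDysonETransform_nontrivial_or_sub_mem_stabilizer (U V : Finset G) :
    (∃ e : G, (addDysonETransform e (U, V)).2.Nonempty ∧ (V \ (-e +ᵥ U)).Nonempty) ∨
      ∀ v ∈ V, ∀ v' ∈ V, v' - v ∈ stabilizer G U := by
  refine or_iff_not_imp_left.2 fun hno v hv v' hv' ↦ mem_stabilizer_finset'.2 fun u hu ↦ ?_
  by_contra hv'u
  refine hno ⟨u - v, ⟨v, mem_inter.2 ⟨hv, ?_⟩⟩, v', mem_sdiff.2 ⟨hv', ?_⟩⟩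
  · rwa [mem_neg_vadd_finset_iff, vadd_eq_add, sub_add_cancel]
  · rw [mem_neg_vadd_finset_iff]
    convert hv'u using 2
    simp only [vadd_eq_add]
    abel

/-- The inequality of the theorem, rearranged so that no subtraction occurs. -/
def PollardBound (U V : Finset G) (t : ℕ) : Prop :=
  t * (#U + #V) ≤ truncatedRepSum U V t + t * t + t * alphaFn U V

lemma pollardBound_card (U V : Finset G) : PollardBound U V #V := by
  rw [PollardBound, truncatedRepSum_of_card_le le_rfl]
  nlinarith

lemma pollardBound_of_sub_mem_stabilizer {U V : Finset G} {t : ℕ} (htV : t ≤ #V)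
    (hVU : #V ≤ #U) (h : ∀ v ∈ V, ∀ v' ∈ V, v' - v ∈ stabilizer G U) : PollardBound U V t := by
  obtain rfl | ht := t.eq_zero_or_pos
  · simp [PollardBound]
  obtain ⟨b, hb⟩ := card_pos.1 (ht.trans_le htV)
  have hα := card_le_alphaFn_of_sub_mem_stabilizer (card_pos.1 (ht.trans_le (htV.trans hVU)))
    (h b hb)
  have := mul_card_le_truncatedRepSum (s := U) htV
  rw [PollardBound]
  nlinarith

lemma PollardBound.of_addDysonETransform {U V : Finset G} {t : ℕ} (e : G)
    (h : PollardBound (addDysonETransform e (U, V)).1 (addDysonETransform e (U, V)).2 t) :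
    PollardBound U V t := by
  have hcard : #(addDysonETransform e (U, V)).1 + #(addDysonETransform e (U, V)).2 = #U + #V :=
    addDysonETransform.card e (U, V)
  have hα : alphaFn (addDysonETransform e (U, V)).1 (addDysonETransform e (U, V)).2 ≤
      alphaFn U V := alphaFn_mono (card_le_card inter_subset_left) hcard.le
  have hsum := truncatedRepSum_addDysonETransform_add_le e U V t 0
  rw [truncatedRepSum_zero, add_zero, add_zero] at hsum
  unfold PollardBound at h ⊢
  rw [hcard] at h
  nlinarith

lemma PollardBound.of_sdiff_addDysonETransform {U V : Finset G} {t : ℕ} (e : G)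
    (ht : #(addDysonETransform e (U, V)).2 ≤ t)
    (h : PollardBound (U \ (e +ᵥ V)) (V \ (-e +ᵥ U)) (t - #(addDysonETransform e (U, V)).2)) :
    PollardBound U V t := by
  set m := #(addDysonETransform e (U, V)).2
  obtain ⟨t, rfl⟩ := Nat.exists_eq_add_of_le ht
  rw [Nat.add_sub_cancel_left] at h
  have hD : #(addDysonETransform e (U, V)).1 + m = #U + #V := addDysonETransform.card e (U, V)
  have hU : #(U \ (e +ᵥ V)) + m = #U := card_sdiff_add_card_addDysonETransform_snd e U V
  have hV : #(V \ (-e +ᵥ U)) + m = #V := card_sdiff_neg_vadd_add_card_addDysonETransform_snd e U V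
  have hα : alphaFn (U \ (e +ᵥ V)) (V \ (-e +ᵥ U)) ≤ alphaFn U V :=
    alphaFn_mono (card_le_card sdiff_subset) (by omega)
  have hsum := truncatedRepSum_addDysonETransform_add_le e U V m t
  rw [truncatedRepSum_of_card_le le_rfl] at hsum
  unfold PollardBound at h ⊢
  nlinarith

theorem pollardBound {U V : Finset G} {t : ℕ} (htV : t ≤ #V) (hVU : #V ≤ #U) :
    PollardBound U V t := by
  induction hn : #V using Nat.strong_induction_on generalizing t U V with | _ n ih =>
  subst hn
  obtain rfl | htV := htV.eq_or_lt
  · exact pollardBound_card U V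
  obtain ⟨e, ⟨b, hb⟩, ⟨b', hb'⟩⟩ | hper :=
    exists_addDysonETransform_nontrivial_or_sub_mem_stabilizer U V
  · have hb'pos := card_pos.2 ⟨b', hb'⟩
    have hU := card_sdiff_add_card_addDysonETransform_snd e U V
    have hV := card_sdiff_neg_vadd_add_card_addDysonETransform_snd e U V
    have hm : #(addDysonETransform e (U, V)).2 < #V := by omega
    rcases le_or_gt t #(addDysonETransform e (U, V)).2 with htm | htm
    · have hUD : #U ≤ #(addDysonETransform e (U, V)).1 := card_le_card subset_union_left
      exact .of_addDysonETransform e (ih _ hm htm (by omega) rfl)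
    · have hbpos := card_pos.2 ⟨b, hb⟩
      refine .of_sdiff_addDysonETransform e htm.le (ih _ ?_ ?_ ?_ rfl) <;> omega
  · exact pollardBound_of_sub_mem_stabilizer htV.le hVU hper

end

theorem pollard_type_theorem_general {G : Type*} [AddCommGroup G] [DecidableEq G]
    (t : ℕ) (U V : Finset G) (htV : t ≤ V.card) (hVU : V.card ≤ U.card) :
    (t : ℝ) * ((U.card : ℝ) + (V.card : ℝ) - (t : ℝ) - (alphaFn U V : ℝ)) ≤
      ((∑ x ∈ U + V, min (((U ×ˢ V).filter (fun p => p.1 + p.2 = x)).card) t : ℕ) : ℝ) := by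
  have h : ((t * (U.card + V.card) : ℕ) : ℝ) ≤
      ((U.truncatedRepSum V t + t * t + t * alphaFn U V : ℕ) : ℝ) :=
    Nat.cast_le.2 (pollardBound htV hVU)
  change _ ≤ ((U.truncatedRepSum V t : ℕ) : ℝ)
  push_cast at h
  linarith

/-- (Pollard-type theorem for abelian groups.) Let `t ≥ 1` and let
`U, V ⊆ G` be finite with `t ≤ |V| ≤ |U|`. Then
`∑_{x ∈ G} min(1_U*1_V(x), t) ≥ t(|U| + |V| - t - α(U,V))`. -/
theorem pollard_type_theorem {G : Type*} [AddCommGroup G] [DecidableEq G]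
    (t : ℕ) (ht : 0 < t) (U V : Finset G) (htV : t ≤ V.card) (hVU : V.card ≤ U.card) :
    (t : ℝ) * ((U.card : ℝ) + (V.card : ℝ) - (t : ℝ) - (alphaFn U V : ℝ)) ≤
      ((∑ x ∈ U + V, min (((U ×ˢ V).filter (fun p => p.1 + p.2 = x)).card) t : ℕ) : ℝ) :=
  pollard_type_theorem_general t U V htV hVU
end

section
/- Let A, B ⊆ G be finite nonempty sets, let 0 < ε < 1/2, and set β := β((1+4ε)·|A|). If |B| ≥ (1/2 + ε)·(|A| + β), then the number of pairs (b₁, b₂) ∈ B × B such that b₁ + b₂ ∉ A is at least ε²·|B|². -/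
open Pointwise

/-- `betaSubgroup G t` is the maximum of `|H|` over all finite subgroups `H ≤ G` with
`|H| ≤ t` (the trivial subgroup guarantees this is at least `1` whenever `t ≥ 1`). -/
noncomputable def betaSubgroup (G : Type*) [AddCommGroup G] (t : ℝ) : ℕ :=
  sSup {k : ℕ | ∃ H : AddSubgroup G, Nat.card H = k ∧ 0 < k ∧ (k : ℝ) ≤ t}

namespace SupersatAux

variable {G : Type*} [AddCommGroup G] [DecidableEq G]

/-- The number of ordered pairs in `X × Y` whose sum avoids `A`. -/
def badP (X Y A : Finset G) : ℕ := ((X ×ˢ Y).filter (fun p => p.1 + p.2 ∉ A)).card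

lemma badP_add_good (X Y A : Finset G) :
    badP X Y A + ((X ×ˢ Y).filter (fun p => p.1 + p.2 ∈ A)).card = X.card * Y.card := by
  rw [badP, add_comm, ← Finset.card_product]
  exact Finset.card_filter_add_card_filter_not _

lemma good_le (X Y A : Finset G) :
    ((X ×ˢ Y).filter (fun p => p.1 + p.2 ∈ A)).card ≤ A.card * Y.card := by
  have h : ((X ×ˢ Y).filter (fun p => p.1 + p.2 ∈ A)).card ≤ (A ×ˢ Y).card := by
    apply Finset.card_le_card_of_injOn (fun p => (p.1 + p.2, p.2))
    · intro p hp
      simp only [Finset.mem_coe, Finset.mem_filter, Finset.mem_product] at hp ⊢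
      exact ⟨hp.2, hp.1.2⟩
    · intro p _ q _ h
      simp only [Prod.mk.injEq] at h
      obtain ⟨h1, h2⟩ := h
      have h3 : p.1 = q.1 := by rw [h2] at h1; exact add_right_cancel h1
      exact Prod.ext h3 h2
  simpa [Finset.card_product] using h

lemma badP_ge (X Y A : Finset G) :
    (X.card : ℝ) * Y.card - A.card * Y.card ≤ (badP X Y A : ℝ) := by
  have h1 : (badP X Y A : ℝ) + ((X ×ˢ Y).filter (fun p => p.1 + p.2 ∈ A)).card
      = X.card * Y.card := by exact_mod_cast congrArg (Nat.cast (R := ℝ)) (badP_add_good X Y A)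
  have h2 : (((X ×ˢ Y).filter (fun p => p.1 + p.2 ∈ A)).card : ℝ) ≤ A.card * Y.card := by
    exact_mod_cast good_le X Y A
  linarith

lemma badP_split (X Y A : Finset G) (e : G) :
    badP (X ∪ Y.image (· + e)) (Y.filter (fun y => y + e ∈ X)) A
      + badP (X.filter (fun x => x - e ∉ Y)) (Y.filter (fun y => y + e ∉ X)) A
    ≤ badP X Y A := by
  classical
  set X₁ := X ∪ Y.image (· + e) with hX₁
  set Y₁ := Y.filter (fun y => y + e ∈ X) with hY₁
  set X' := X.filter (fun x => x - e ∉ Y) with hX'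
  set Y' := Y.filter (fun y => y + e ∉ X) with hY'
  set B := (X ×ˢ Y).filter (fun p => p.1 + p.2 ∉ A) with hB
  set B₁ := (X₁ ×ˢ Y₁).filter (fun p => p.1 + p.2 ∉ A) with hB₁
  set B₂ := (X' ×ˢ Y').filter (fun p => p.1 + p.2 ∉ A) with hB₂
  set φ : G × G → G × G := fun p => if p.1 ∈ X then p else (p.2 + e, p.1 - e) with hφ
  have memB₁ : ∀ p ∈ B₁, p.1 ∈ X₁ ∧ p.2 ∈ Y ∧ p.2 + e ∈ X ∧ p.1 + p.2 ∉ A := by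
    intro p hp
    simp only [hB₁, Finset.mem_filter, Finset.mem_product, hY₁] at hp
    obtain ⟨⟨h1, h2⟩, h3⟩ := hp
    exact ⟨h1, h2.1, h2.2, h3⟩
  have himg : ∀ p ∈ B₁, φ p ∈ B := by
    intro p hp
    obtain ⟨h1, h2, h3, h4⟩ := memB₁ p hp
    by_cases hx : p.1 ∈ X
    · simp only [hφ, if_pos hx, hB, Finset.mem_filter, Finset.mem_product]
      exact ⟨⟨hx, h2⟩, h4⟩
    · simp only [hφ, if_neg hx, hB, Finset.mem_filter, Finset.mem_product]
      have h1' : p.1 ∈ Y.image (· + e) := by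
        rcases Finset.mem_union.mp h1 with h | h
        · exact absurd h hx
        · exact h
      obtain ⟨y, hy, hye⟩ := Finset.mem_image.mp h1'
      refine ⟨⟨h3, ?_⟩, ?_⟩
      · have : p.1 - e = y := by rw [← hye]; abel
        rw [this]; exact hy
      · have : p.2 + e + (p.1 - e) = p.1 + p.2 := by abel
        rw [this]; exact h4
  have hinj : Set.InjOn φ B₁ := by
    intro p hp q hq hpq
    by_cases hx : p.1 ∈ X <;> by_cases hx' : q.1 ∈ X
    · simpa [hφ, if_pos hx, if_pos hx'] using hpq
    · exfalso
      simp only [hφ, if_pos hx, if_neg hx'] at hpq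
      obtain ⟨-, -, h3, -⟩ := memB₁ p hp
      have : p.2 = q.1 - e := congrArg Prod.snd hpq
      rw [this] at h3
      rw [sub_add_cancel] at h3
      exact hx' h3
    · exfalso
      simp only [hφ, if_neg hx, if_pos hx'] at hpq
      obtain ⟨-, -, h3, -⟩ := memB₁ q hq
      have : q.2 = p.1 - e := (congrArg Prod.snd hpq).symm
      rw [this] at h3
      rw [sub_add_cancel] at h3
      exact hx h3
    · simp only [hφ, if_neg hx, if_neg hx', Prod.mk.injEq] at hpq
      obtain ⟨h1, h2⟩ := hpq
      have e1 : p.2 = q.2 := by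
        have := add_right_cancel (a := p.2) (b := e) (c := q.2) h1
        exact this
      have e2 : p.1 = q.1 := by
        have := sub_left_injective (b := e) h2
        exact this
      exact Prod.ext e2 e1
  have hB₂B : B₂ ⊆ B := by
    intro z hz
    simp only [hB₂, hB, Finset.mem_filter, Finset.mem_product, hX', hY'] at hz ⊢
    exact ⟨⟨hz.1.1.1, hz.1.2.1⟩, hz.2⟩
  have hdisj : Disjoint (B₁.image φ) B₂ := by
    rw [Finset.disjoint_left]
    rintro z hz hz2
    obtain ⟨p, hp, rfl⟩ := Finset.mem_image.mp hz
    obtain ⟨-, -, h3, -⟩ := memB₁ p hp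
    simp only [hB₂, Finset.mem_filter, Finset.mem_product, hX', hY'] at hz2
    by_cases hx : p.1 ∈ X
    · have h4 : (φ p).2 = p.2 := by simp [hφ, if_pos hx]
      rw [h4] at hz2
      exact hz2.1.2.2 h3
    · have h4 : (φ p).1 = p.2 + e := by simp [hφ, if_neg hx]
      rw [h4] at hz2
      apply hz2.1.1.2
      rw [add_sub_cancel_right]
      obtain ⟨-, h2', -, -⟩ := memB₁ p hp
      exact h2'
  calc B₁.card + B₂.card = (B₁.image φ).card + B₂.card := by
        rw [Finset.card_image_of_injOn hinj]
    _ = ((B₁.image φ) ∪ B₂).card := (Finset.card_union_of_disjoint hdisj).symm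
    _ ≤ B.card := by
        apply Finset.card_le_card
        intro z hz
        rcases Finset.mem_union.mp hz with h | h
        · obtain ⟨p, hp, rfl⟩ := Finset.mem_image.mp h
          exact himg p hp
        · exact hB₂B h


lemma KPA (N : ℕ) : ∀ (X Y A : Finset G) (t : ℕ), Y.card ≤ N → X.Nonempty → Y.Nonempty →
    1 ≤ t → t ≤ Y.card → Y.card ≤ X.card →
    ∃ (U m : ℕ) (K : AddSubgroup G),
      U + 1 ≤ t ∧ t ≤ U + m ∧ 0 < Nat.card K ∧ m ≤ Nat.card K ∧
      Nat.card K + 2 * U + m ≤ X.card + Y.card ∧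
      ((U : ℝ) * ((X.card : ℝ) + (Y.card : ℝ) - (U : ℝ) - (A.card : ℝ))
        + (m : ℝ) * ((X.card : ℝ) + (Y.card : ℝ) - 2 * (U : ℝ) - (m : ℝ) - (A.card : ℝ))
        ≤ (badP X Y A : ℝ)) := by
  induction N with
  | zero =>
      intro X Y A t hN _ hY _ _ _
      exact absurd (Finset.card_pos.mpr hY) (by omega)
  | succ N ih =>
      intro X Y A t hN hX hY ht htY hYX
      by_cases hterm : ∀ x ∈ X, ∀ y ∈ Y, Y.filter (fun z => z + (x - y) ∈ X) = Y
      · -- terminal case: X is periodic under differences of Y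
        obtain ⟨y₀, hy₀⟩ := hY
        obtain ⟨x₀, hx₀⟩ := hX
        have hkey : ∀ x ∈ X, ∀ y ∈ Y, x + (y - y₀) ∈ X := by
          intro x hx y hy
          have h1 := hterm x hx y₀ hy₀
          have hy' : y ∈ Y.filter (fun z => z + (x - y₀) ∈ X) := by rw [h1]; exact hy
          have h2 := (Finset.mem_filter.mp hy').2
          have h3 : x + (y - y₀) = y + (x - y₀) := by abel
          rw [h3]; exact h2
        set K : AddSubgroup G :=
          { carrier := {g | X.image (fun x => x + g) = X}
            zero_mem' := by
              show X.image (fun x => x + 0) = X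
              simp only [add_zero]
              exact Finset.image_id'
            add_mem' := by
              intro g h hg hh
              simp only [Set.mem_setOf_eq] at hg hh ⊢
              have : X.image (fun x => x + (g + h))
                  = (X.image (fun x => x + g)).image (fun x => x + h) := by
                rw [Finset.image_image]
                congr 1
                funext x
                simp [add_assoc]
              rw [this, hg, hh]
            neg_mem' := by
              intro g hg
              simp only [Set.mem_setOf_eq] at hg ⊢
              conv_lhs => rw [← hg]
              rw [Finset.image_image]
              have : ((fun x => x + -g) ∘ (fun x => x + g)) = id := by
                funext x; simp
              rw [this, Finset.image_id] } with hK
        have hmemK : ∀ y ∈ Y, y - y₀ ∈ K := by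
          intro y hy
          show X.image (fun x => x + (y - y₀)) = X
          apply Finset.eq_of_subset_of_card_le
          · intro z hz
            obtain ⟨x, hx, rfl⟩ := Finset.mem_image.mp hz
            exact hkey x hx y hy
          · rw [Finset.card_image_of_injective _ (add_left_injective _)]
        have hfin : Finite K := by
          apply Finite.of_injective (fun k : K => (⟨x₀ + k.1, by
            have h1 : X.image (fun x => x + k.1) = X := k.2
            rw [← h1]; exact Finset.mem_image_of_mem _ hx₀⟩ : {x // x ∈ X}))
          intro k k' hkk
          have := congrArg Subtype.val hkk
          simp only at this
          exact Subtype.ext (add_left_cancel this)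
        have hcardle : Nat.card K ≤ X.card := by
          rw [← Nat.card_eq_finsetCard X]
          apply Nat.card_le_card_of_injective (fun k : K => (⟨x₀ + k.1, by
            have h1 : X.image (fun x => x + k.1) = X := k.2
            rw [← h1]; exact Finset.mem_image_of_mem _ hx₀⟩ : {x // x ∈ X}))
          intro k k' hkk
          have := congrArg Subtype.val hkk
          simp only at this
          exact Subtype.ext (add_left_cancel this)
        have hcardge : Y.card ≤ Nat.card K := by
          rw [← Nat.card_eq_finsetCard Y]
          apply Nat.card_le_card_of_injective (fun y : {x // x ∈ Y} => (⟨y.1 - y₀,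
            hmemK y.1 y.2⟩ : K))
          intro y y' hyy
          have h1 := congrArg Subtype.val hyy
          simp only at h1
          exact Subtype.ext (by have := congrArg (· + y₀) h1; simpa using this)
        have hpos : 0 < Nat.card K := by
          have : Nonempty K := ⟨0, K.zero_mem⟩
          exact Nat.card_pos
        refine ⟨0, Y.card, K, by omega, by omega, hpos, hcardge, by omega, ?_⟩
        have h1 := badP_ge X Y A
        push_cast
        nlinarith [h1]
      · -- recursive case
        push_neg at hterm
        obtain ⟨x₀, hx₀, y₀, hy₀, hne⟩ := hterm
        set e := x₀ - y₀ with he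
        set X₁ := X ∪ Y.image (· + e) with hX₁
        set Y₁ := Y.filter (fun y => y + e ∈ X) with hY₁
        set X₂ := X.filter (fun x => x - e ∈ Y) with hX₂
        set X' := X.filter (fun x => x - e ∉ Y) with hX'
        set Y' := Y.filter (fun y => y + e ∉ X) with hY'
        have hy₀Y₁ : y₀ ∈ Y₁ := by
          rw [hY₁, Finset.mem_filter]
          refine ⟨hy₀, ?_⟩
          have : y₀ + e = x₀ := by rw [he]; abel
          rw [this]; exact hx₀
        have hY₁ss : Y₁ ⊂ Y := by
          rw [Finset.ssubset_iff_subset_ne]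
          exact ⟨Finset.filter_subset _ _, hne⟩
        have hY₁lt : Y₁.card < Y.card := Finset.card_lt_card hY₁ss
        have hX₂img : X₂ = Y₁.image (· + e) := by
          ext z
          simp only [hX₂, hY₁, Finset.mem_filter, Finset.mem_image]
          constructor
          · rintro ⟨hz1, hz2⟩
            exact ⟨z - e, ⟨hz2, by rw [sub_add_cancel]; exact hz1⟩, by rw [sub_add_cancel]⟩
          · rintro ⟨y, ⟨hy1, hy2⟩, rfl⟩
            exact ⟨hy2, by rw [add_sub_cancel_right]; exact hy1⟩
        have hX₂card : X₂.card = Y₁.card := by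
          rw [hX₂img, Finset.card_image_of_injective _ (add_left_injective _)]
        have hX₁card : X₁.card + Y₁.card = X.card + Y.card := by
          have h1 := Finset.card_union_add_card_inter X (Y.image (· + e))
          have h2 : X ∩ Y.image (· + e) = X₂ := by
            ext z
            simp only [hX₂, Finset.mem_inter, Finset.mem_filter, Finset.mem_image]
            constructor
            · rintro ⟨hz1, y, hy, rfl⟩
              exact ⟨hz1, by rw [add_sub_cancel_right]; exact hy⟩
            · rintro ⟨hz1, hz2⟩
              exact ⟨hz1, z - e, hz2, by rw [sub_add_cancel]⟩
          rw [h2, hX₂card] at h1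
          rw [Finset.card_image_of_injective _ (add_left_injective _)] at h1
          rw [← hX₁] at h1
          omega
        have hXsplit : X₂.card + X'.card = X.card := by
          have := Finset.card_filter_add_card_filter_not
            (s := X) (p := fun x => x - e ∈ Y)
          simpa [hX₂, hX'] using this
        have hYsplit : Y₁.card + Y'.card = Y.card := by
          have := Finset.card_filter_add_card_filter_not
            (s := Y) (p := fun y => y + e ∈ X)
          simpa [hY₁, hY'] using this
        have hsplit := badP_split X Y A e
        by_cases hjump : t ≤ Y₁.card
        · -- non-jump : recurse on (X₁, Y₁) with the same t
          have hXX₁ : X ⊆ X₁ := Finset.subset_union_left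
          obtain ⟨U, m, K, c1, c2, c3, c4, c5, cineq⟩ :=
            ih X₁ Y₁ A t (by omega) (hX.mono hXX₁) ⟨y₀, hy₀Y₁⟩ ht hjump (by omega)
          refine ⟨U, m, K, c1, c2, c3, c4, by omega, ?_⟩
          have hσ : (X₁.card : ℝ) + (Y₁.card : ℝ) = (X.card : ℝ) + (Y.card : ℝ) := by
            exact_mod_cast congrArg (Nat.cast (R := ℝ)) hX₁card
          rw [hσ] at cineq
          have hmono : (badP X₁ Y₁ A : ℝ) ≤ (badP X Y A : ℝ) := by
            have : badP X₁ Y₁ A ≤ badP X Y A := le_trans (Nat.le_add_right _ _) hsplit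
            exact_mod_cast this
          linarith
        · -- jump : recurse on (X', Y') with t - u
          set u := Y₁.card with hu
          have hu1 : 1 ≤ u := Finset.card_pos.mpr ⟨y₀, hy₀Y₁⟩
          have hult : u + 1 ≤ t := by omega
          have hX'c : X'.card = X.card - u := by omega
          have hY'c : Y'.card = Y.card - u := by omega
          obtain ⟨U', m, K, c1, c2, c3, c4, c5, cineq⟩ :=
            ih X' Y' A (t - u)
              (by omega)
              (Finset.card_pos.mp (by omega))
              (Finset.card_pos.mp (by omega))
              (by omega) (by omega) (by omega)
          refine ⟨u + U', m, K, by omega, by omega, c3, c4, by omega, ?_⟩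
          -- the three real inequalities
          have hbad1 := badP_ge X₁ Y₁ A
          have hσ1 : (X₁.card : ℝ) = (X.card : ℝ) + (Y.card : ℝ) - u := by
            have : (X₁.card : ℝ) + (Y₁.card : ℝ) = (X.card : ℝ) + (Y.card : ℝ) := by
              exact_mod_cast congrArg (Nat.cast (R := ℝ)) hX₁card
            rw [hu]; linarith
          have hσ2 : (X'.card : ℝ) = (X.card : ℝ) - u := by
            rw [hu]
            have : (X₂.card : ℝ) + (X'.card : ℝ) = (X.card : ℝ) := by
              exact_mod_cast congrArg (Nat.cast (R := ℝ)) hXsplit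
            have h2 : (X₂.card : ℝ) = (Y₁.card : ℝ) := by exact_mod_cast hX₂card
            linarith
          have hσ3 : (Y'.card : ℝ) = (Y.card : ℝ) - u := by
            have : (Y₁.card : ℝ) + (Y'.card : ℝ) = (Y.card : ℝ) := by
              exact_mod_cast congrArg (Nat.cast (R := ℝ)) hYsplit
            rw [hu]; linarith
          rw [hσ2, hσ3] at cineq
          rw [hσ1, hu] at hbad1
          have hmono : (badP X₁ Y₁ A : ℝ) + (badP X' Y' A : ℝ) ≤ (badP X Y A : ℝ) := by
            exact_mod_cast hsplit
          have hUcast : ((u + U' : ℕ) : ℝ) = (u : ℝ) + (U' : ℝ) := by push_cast; ring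
          rw [hUcast]
          have hkey : ((u : ℝ) + (U' : ℝ)) * ((X.card : ℝ) + (Y.card : ℝ) - ((u : ℝ) + (U' : ℝ)) - (A.card : ℝ))
              + (m : ℝ) * ((X.card : ℝ) + (Y.card : ℝ) - 2 * ((u : ℝ) + (U' : ℝ)) - (m : ℝ) - (A.card : ℝ))
              = (((X.card : ℝ) + (Y.card : ℝ) - (u : ℝ)) * (Y₁.card : ℝ) - (A.card : ℝ) * (Y₁.card : ℝ))
                + ((U' : ℝ) * ((X.card : ℝ) - (u : ℝ) + ((Y.card : ℝ) - (u : ℝ)) - (U' : ℝ) - (A.card : ℝ))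
                  + (m : ℝ) * ((X.card : ℝ) - (u : ℝ) + ((Y.card : ℝ) - (u : ℝ)) - 2 * (U' : ℝ) - (m : ℝ) - (A.card : ℝ))) := by
            rw [hu]; ring
          rw [hkey]
          linarith

lemma concave_min {c p q w : ℝ} (h1 : p ≤ w) (h2 : w ≤ q) :
    min (p * (c - p)) (q * (c - q)) ≤ w * (c - w) := by
  rcases le_or_gt (p + w) c with h | h
  · refine le_trans (min_le_left _ _) ?_
    nlinarith
  · refine le_trans (min_le_right _ _) ?_
    nlinarith

lemma ep1 (ε n a b t : ℝ) (hε0 : 0 < ε) (hε : ε < 1 / 2) (hnpos : 0 < n) (hb1 : 1 ≤ b)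
    (hS : (1 + 2 * ε) * (a + b) ≤ 2 * n) (htlow : ε * n ≤ t) (hthigh : t ≤ ε * n + 1) :
    ε ^ 2 * n ^ 2 ≤ t * (2 * n - a - t) := by
  have h12e : (0 : ℝ) < 1 + 2 * ε := by linarith
  have htpos : (0 : ℝ) < t := lt_of_lt_of_le (mul_pos hε0 hnpos) htlow
  have k1 : 4 * ε * n ≤ (1 + 2 * ε) * (2 * n - a - b) := by nlinarith
  have k2 : ε * n * (3 - 2 * ε) + (1 + 2 * ε) * (b - (t - ε * n))
      ≤ (1 + 2 * ε) * (2 * n - a - t) := by nlinarith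
  have p1 : t * (ε * n * (3 - 2 * ε) + (1 + 2 * ε) * (b - (t - ε * n)))
      ≤ t * ((1 + 2 * ε) * (2 * n - a - t)) := mul_le_mul_of_nonneg_left k2 htpos.le
  have p2 : (ε * n) * (ε * n * (3 - 2 * ε)) ≤ t * (ε * n * (3 - 2 * ε)) := by
    apply mul_le_mul_of_nonneg_right htlow
    exact mul_nonneg (mul_nonneg hε0.le hnpos.le) (by linarith)
  have p3 : (0 : ℝ) ≤ t * ((1 + 2 * ε) * (b - (t - ε * n))) := by
    apply mul_nonneg htpos.le
    apply mul_nonneg h12e.le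
    linarith
  have p4 : (1 + 2 * ε) * (ε ^ 2 * n ^ 2) ≤ (ε * n) * (ε * n * (3 - 2 * ε)) := by
    nlinarith [mul_nonneg (sq_nonneg (ε * n)) (by linarith : (0:ℝ) ≤ 2 - 4 * ε)]
  have eq1 : t * ((1 + 2 * ε) * (2 * n - a - t)) = (1 + 2 * ε) * (t * (2 * n - a - t)) := by ring
  have eq2 : t * (ε * n * (3 - 2 * ε) + (1 + 2 * ε) * (b - (t - ε * n)))
      = t * (ε * n * (3 - 2 * ε)) + t * ((1 + 2 * ε) * (b - (t - ε * n))) := by ring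
  have p5 : (1 + 2 * ε) * (ε ^ 2 * n ^ 2) ≤ (1 + 2 * ε) * (t * (2 * n - a - t)) := by
    linarith
  exact le_of_mul_le_mul_left p5 h12e

lemma ep2 (ε n a b t : ℝ) (hε0 : 0 < ε) (hε : ε < 1 / 2) (hnpos : 0 < n) (hb1 : 1 ≤ b)
    (hS : (1 + 2 * ε) * (a + b) ≤ 2 * n) (htlow : ε * n ≤ t) (hthigh : t ≤ ε * n + 1) :
    ε ^ 2 * n ^ 2 ≤ (t - 1 + b) * (2 * n - a - (t - 1 + b)) := by
  have h12e : (0 : ℝ) < 1 + 2 * ε := by linarith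
  have hq1 : ε * n ≤ t - 1 + b := by linarith
  have hq0 : (0 : ℝ) < t - 1 + b := lt_of_lt_of_le (mul_pos hε0 hnpos) hq1
  have k1 : 4 * ε * n ≤ (1 + 2 * ε) * (2 * n - a - b) := by nlinarith
  have k3 : ε * n * (3 - 2 * ε) + (1 + 2 * ε) * (ε * n - (t - 1))
      ≤ (1 + 2 * ε) * (2 * n - a - (t - 1 + b)) := by nlinarith
  have p1 : (t - 1 + b) * (ε * n * (3 - 2 * ε) + (1 + 2 * ε) * (ε * n - (t - 1)))
      ≤ (t - 1 + b) * ((1 + 2 * ε) * (2 * n - a - (t - 1 + b))) :=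
    mul_le_mul_of_nonneg_left k3 hq0.le
  have p2 : (ε * n) * (ε * n * (3 - 2 * ε)) ≤ (t - 1 + b) * (ε * n * (3 - 2 * ε)) := by
    apply mul_le_mul_of_nonneg_right hq1
    exact mul_nonneg (mul_nonneg hε0.le hnpos.le) (by linarith)
  have p3 : (0 : ℝ) ≤ (t - 1 + b) * ((1 + 2 * ε) * (ε * n - (t - 1))) := by
    apply mul_nonneg hq0.le
    apply mul_nonneg h12e.le
    linarith
  have p4 : (1 + 2 * ε) * (ε ^ 2 * n ^ 2) ≤ (ε * n) * (ε * n * (3 - 2 * ε)) := by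
    nlinarith [mul_nonneg (sq_nonneg (ε * n)) (by linarith : (0:ℝ) ≤ 2 - 4 * ε)]
  have eq1 : (t - 1 + b) * ((1 + 2 * ε) * (2 * n - a - (t - 1 + b)))
      = (1 + 2 * ε) * ((t - 1 + b) * (2 * n - a - (t - 1 + b))) := by ring
  have eq2 : (t - 1 + b) * (ε * n * (3 - 2 * ε) + (1 + 2 * ε) * (ε * n - (t - 1)))
      = (t - 1 + b) * (ε * n * (3 - 2 * ε))
        + (t - 1 + b) * ((1 + 2 * ε) * (ε * n - (t - 1))) := by ring
  have p5 : (1 + 2 * ε) * (ε ^ 2 * n ^ 2)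
      ≤ (1 + 2 * ε) * ((t - 1 + b) * (2 * n - a - (t - 1 + b))) := by linarith
  exact le_of_mul_le_mul_left p5 h12e

lemma case1 (ε n a b t w : ℝ) (hε0 : 0 < ε) (hε : ε < 1 / 2) (hnpos : 0 < n) (hb1 : 1 ≤ b)
    (hS : (1 + 2 * ε) * (a + b) ≤ 2 * n) (htlow : ε * n ≤ t) (hthigh : t ≤ ε * n + 1)
    (hwl : t ≤ w) (hwu : w ≤ t - 1 + b) :
    ε ^ 2 * n ^ 2 ≤ w * (2 * n - a - w) := by
  have hconc := concave_min (c := 2 * n - a) hwl hwu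
  have h1 := ep1 ε n a b t hε0 hε hnpos hb1 hS htlow hthigh
  have h2 := ep2 ε n a b t hε0 hε hnpos hb1 hS htlow hthigh
  calc ε ^ 2 * n ^ 2 ≤ min (t * (2 * n - a - t)) ((t - 1 + b) * (2 * n - a - (t - 1 + b))) :=
        le_min h1 h2
    _ ≤ w * (2 * n - a - w) := hconc

lemma case2 (ε n a t w : ℝ) (hε0 : 0 < ε) (hε : ε < 1 / 2) (hn2 : 2 ≤ n)
    (h2nW : (1 + 4 * ε) * a ≤ 2 * n - w) (hwt : t ≤ w) (hwn : w ≤ n)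
    (htlow : ε * n ≤ t) (hthigh : t ≤ ε * n + 1) (htn : t ≤ n) :
    ε ^ 2 * n ^ 2 ≤ w * (2 * n - a - w) := by
  have hnpos : (0 : ℝ) < n := by linarith
  have h14e : (0 : ℝ) < 1 + 4 * ε := by linarith
  have htpos : (0 : ℝ) < t := lt_of_lt_of_le (mul_pos hε0 hnpos) htlow
  have hw0 : (0 : ℝ) ≤ w := by linarith
  have hmono : t * (2 * n - t) ≤ w * (2 * n - w) := by nlinarith
  have h2nT : (0 : ℝ) ≤ 2 * n - t := by linarith
  have q1 : 4 * ε * ((ε * n) * (2 * n - t)) ≤ 4 * ε * (t * (2 * n - t)) := by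
    apply mul_le_mul_of_nonneg_left _ (by linarith : (0:ℝ) ≤ 4 * ε)
    exact mul_le_mul_of_nonneg_right htlow h2nT
  have q2 : 4 * ε * ((ε * n) * (2 * n - (ε * n + 1))) ≤ 4 * ε * ((ε * n) * (2 * n - t)) := by
    apply mul_le_mul_of_nonneg_left _ (by linarith : (0:ℝ) ≤ 4 * ε)
    apply mul_le_mul_of_nonneg_left _ (by positivity)
    linarith
  have hx1 : (0:ℝ) ≤ n * (1 - 2 * ε) := mul_nonneg (by linarith) (by linarith)
  have hx2 : (0:ℝ) ≤ 7 * n - 8 * ε * n - 4 := by linarith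
  have q3 : (1 + 4 * ε) * (ε ^ 2 * n ^ 2) ≤ 4 * ε * ((ε * n) * (2 * n - (ε * n + 1))) := by
    nlinarith [mul_nonneg (mul_nonneg (sq_nonneg ε) hnpos.le) hx2]
  have hmain2 : (1 + 4 * ε) * (ε ^ 2 * n ^ 2) ≤ 4 * ε * (t * (2 * n - t)) := by linarith
  have q4 : 4 * ε * (2 * n - w) ≤ (1 + 4 * ε) * (2 * n - a - w) := by linarith
  have q5 : w * (4 * ε * (2 * n - w)) ≤ w * ((1 + 4 * ε) * (2 * n - a - w)) :=
    mul_le_mul_of_nonneg_left q4 hw0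
  have q6 : 4 * ε * (t * (2 * n - t)) ≤ 4 * ε * (w * (2 * n - w)) := by
    apply mul_le_mul_of_nonneg_left hmono (by linarith : (0:ℝ) ≤ 4 * ε)
  have eqA : w * (4 * ε * (2 * n - w)) = 4 * ε * (w * (2 * n - w)) := by ring
  have eqB : w * ((1 + 4 * ε) * (2 * n - a - w)) = (1 + 4 * ε) * (w * (2 * n - a - w)) := by ring
  have q7 : (1 + 4 * ε) * (ε ^ 2 * n ^ 2) ≤ (1 + 4 * ε) * (w * (2 * n - a - w)) := by linarith
  exact le_of_mul_le_mul_left q7 h14e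

end SupersatAux

set_option maxHeartbeats 4000000 in
/-- (Supersaturation.) Let `A, B ⊆ G` be finite nonempty, `0 < ε < 1/2`
and `β = β((1+4ε)|A|)`. If `|B| ≥ (1/2+ε)(|A|+β)` then the number of pairs
`(b₁,b₂) ∈ B×B` with `b₁+b₂ ∉ A` is at least `ε²|B|²`. -/
theorem supersaturation {G : Type*} [AddCommGroup G] [DecidableEq G]
    (A B : Finset G) (hA : A.Nonempty) (hB : B.Nonempty)
    (ε : ℝ) (hε0 : 0 < ε) (hε : ε < 1 / 2)
    (hcard : (1 / 2 + ε) * ((A.card : ℝ) + (betaSubgroup G ((1 + 4 * ε) * A.card) : ℝ)) ≤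
      (B.card : ℝ)) :
    ε ^ 2 * (B.card : ℝ) ^ 2 ≤
      (((B ×ˢ B).filter (fun p => p.1 + p.2 ∉ A)).card : ℝ) := by
  classical
  have ha1 : (1 : ℝ) ≤ (A.card : ℝ) := by
    have := Finset.card_pos.mpr hA
    exact_mod_cast this
  have hBdd : BddAbove {k : ℕ | ∃ H : AddSubgroup G, Nat.card H = k ∧ 0 < k ∧
      (k : ℝ) ≤ (1 + 4 * ε) * A.card} := by
    refine ⟨⌈(1 + 4 * ε) * (A.card : ℝ)⌉₊, ?_⟩
    rintro k ⟨H, -, -, hle⟩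
    have h2 := le_trans hle (Nat.le_ceil _)
    exact_mod_cast h2
  set βn := betaSubgroup G ((1 + 4 * ε) * A.card) with hβdef
  have hb1 : 1 ≤ βn := by
    apply le_csSup hBdd
    exact ⟨⊥, AddSubgroup.card_bot, one_pos, by push_cast; nlinarith⟩
  have hb1R : (1 : ℝ) ≤ (βn : ℝ) := by exact_mod_cast hb1
  have hn1R : (1 : ℝ) < (B.card : ℝ) := by nlinarith
  have hn2 : (2 : ℝ) ≤ (B.card : ℝ) := by
    have h1 : 1 < B.card := by exact_mod_cast hn1R
    exact_mod_cast h1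
  have hnpos : (0 : ℝ) < (B.card : ℝ) := by linarith
  set T := ⌈ε * (B.card : ℝ)⌉₊ with hTdef
  have hT1 : 1 ≤ T := Nat.one_le_ceil_iff.mpr (by positivity)
  have hTn : T ≤ B.card := Nat.ceil_le.mpr (by nlinarith)
  obtain ⟨U, m, K, c1, c2, c3, c4, c5, cineq⟩ :=
    SupersatAux.KPA B.card B B A T le_rfl hB hB hT1 hTn le_rfl
  set n : ℝ := (B.card : ℝ) with hndef
  set a : ℝ := (A.card : ℝ) with hadef
  have hTlow : ε * n ≤ (T : ℝ) := Nat.le_ceil _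
  have hThigh : (T : ℝ) ≤ ε * n + 1 := le_of_lt (Nat.ceil_lt_add_one (by positivity))
  have hTnR : (T : ℝ) ≤ n := by rw [hndef]; exact_mod_cast hTn
  have hTpos : (0 : ℝ) < (T : ℝ) := by
    have : (0:ℝ) < ε * n := by positivity
    linarith
  have hWT : (T : ℝ) ≤ (U : ℝ) + (m : ℝ) := by exact_mod_cast c2
  have hUc : (U : ℝ) ≤ (T : ℝ) - 1 := by
    have h1 : ((U + 1 : ℕ) : ℝ) ≤ (T : ℝ) := by exact_mod_cast c1
    push_cast at h1
    linarith
  have hKc : (Nat.card K : ℝ) + 2 * (U : ℝ) + (m : ℝ) ≤ 2 * n := by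
    have h1 : ((Nat.card K + 2 * U + m : ℕ) : ℝ) ≤ ((B.card + B.card : ℕ) : ℝ) := by
      exact_mod_cast c5
    push_cast at h1
    linarith
  have hmK : (m : ℝ) ≤ (Nat.card K : ℝ) := by exact_mod_cast c4
  have hU0 : (0 : ℝ) ≤ (U : ℝ) := by positivity
  have hm0 : (0 : ℝ) ≤ (m : ℝ) := by positivity
  set W : ℝ := (U : ℝ) + (m : ℝ) with hWdef
  have hmain : W * (2 * n - a - W) ≤
      (((B ×ˢ B).filter (fun p => p.1 + p.2 ∉ A)).card : ℝ) := by
    have hident : W * (2 * n - a - W)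
        = (U : ℝ) * ((B.card : ℝ) + (B.card : ℝ) - (U : ℝ) - (A.card : ℝ))
          + (m : ℝ) * ((B.card : ℝ) + (B.card : ℝ) - 2 * (U : ℝ) - (m : ℝ) - (A.card : ℝ)) := by
      rw [hWdef, ← hndef, ← hadef]; ring
    rw [hident]
    exact cineq
  have hS : (1 + 2 * ε) * (a + (βn : ℝ)) ≤ 2 * n := by nlinarith [hcard]
  rcases le_or_gt ((Nat.card K : ℝ)) ((1 + 4 * ε) * a) with hcase | hcase
  · -- Case 1 : the subgroup is small, hence bounded by βn
    have hkβ : Nat.card K ≤ βn := by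
      rw [hβdef]
      exact le_csSup hBdd ⟨K, rfl, c3, hcase⟩
    have hkβR : (Nat.card K : ℝ) ≤ (βn : ℝ) := by exact_mod_cast hkβ
    have hfin := SupersatAux.case1 ε n a (βn : ℝ) (T : ℝ) W hε0 hε hnpos hb1R hS hTlow hThigh
      hWT (by rw [hWdef]; linarith)
    linarith [hmain, hfin]
  · -- Case 2 : the subgroup is large
    have h2nW : (1 + 4 * ε) * a ≤ 2 * n - W := by rw [hWdef]; linarith
    have hWn : W ≤ n := by rw [hWdef]; linarith
    have hfin := SupersatAux.case2 ε n a (T : ℝ) W hε0 hε hn2 h2nW hWT hWn hTlow hThigh hTnR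
    linarith [hmain, hfin]
end
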